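/- arXiv:1706.09998 — 2 statements merged into one kernel-verified Lean document; each statement's English description precedes it below -/
import Mathlib

section
/- Let x₁, …, xₙ be pairwise distinct points in a real inner product space, let 0 < α < 1, and let λ₁, …, λₙ ∈ ℝ with Σᵢ λᵢ = 0 and (λ₁, …, λₙ) ≠ 0. Then Σ_{i,j} λᵢ λⱼ ‖xᵢ - xⱼ‖^{2α} < 0. That is, the strict inequality of negative type holds for the α-snowflake of the squared distance matrix. -/
/-!
For `0 < α < 1` and `r ≥ 0`, the substitution `u = t r` gives
`r ^ α * C_α = ∫₀^∞ (1 - exp (-t r)) t ^ (-α - 1) dt` with `0 < C_α < ∞`. Applied to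
`r = ‖xᵢ - xⱼ‖²` and combined with `∑ λᵢ = 0`, this writes `C_α` times the quadratic form as
`-∫₀^∞ G(t) t ^ (-α - 1) dt`, where `G(t) = ∑ λᵢ λⱼ exp (-t ‖xᵢ - xⱼ‖²)`. The Gaussian kernel is
positive semidefinite (it is `exp` of a scaled Gram matrix, up to a diagonal rescaling, and
entrywise powers of a Gram matrix are positive semidefinite by the Schur product theorem), so
`G ≥ 0`. For distinct points the off-diagonal terms of `G(t)` vanish as `t → ∞`, so
`G(t) → ∑ λᵢ² > 0` and the integral is strictly positive.
-/

open Finset MeasureTheory Filter Topology Real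

namespace Matrix

variable {ι : Type*} [Fintype ι]

theorem PosSemidef.sum_mul_mul_nonneg {A : Matrix ι ι ℝ} (hA : A.PosSemidef) (μ : ι → ℝ) :
    0 ≤ ∑ i, ∑ j, μ i * μ j * A i j := by
  have h := hA.dotProduct_mulVec_nonneg μ
  simp only [dotProduct, mulVec, Finset.mul_sum, star_trivial] at h
  exact h.trans_eq (sum_congr rfl fun i _ => sum_congr rfl fun j _ => by ring)

theorem PosSemidef.map_pow {A : Matrix ι ι ℝ} (hA : A.PosSemidef) (k : ℕ) :
    (A.map (· ^ k)).PosSemidef := by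
  induction k with
  | zero =>
    convert posSemidef_vecMulVec_self_star (fun _ : ι => (1 : ℝ)) using 1
    ext; simp [vecMulVec]
  | succ k ih =>
    have hsucc : A.map (· ^ (k + 1)) = A.map (· ^ k) ⊙ A := by ext; simp [pow_succ]
    exact hsucc ▸ ih.hadamard hA

theorem PosSemidef.sum_mul_mul_exp_nonneg {A : Matrix ι ι ℝ} (hA : A.PosSemidef) (μ : ι → ℝ) :
    0 ≤ ∑ i, ∑ j, μ i * μ j * exp (A i j) := by
  have hterm (i j : ι) : HasSum (fun k : ℕ => μ i * μ j * (A i j ^ k / k.factorial))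
      (μ i * μ j * exp (A i j)) := by
    have h := NormedSpace.expSeries_div_hasSum_exp (𝔸 := ℝ) (A i j)
    rw [← Real.exp_eq_exp_ℝ] at h
    exact h.mul_left _
  refine (hasSum_sum fun i _ => hasSum_sum fun j _ => hterm i j).nonneg fun k => ?_
  have hk := (hA.map_pow k).sum_mul_mul_nonneg μ
  calc (0 : ℝ) ≤ (∑ i, ∑ j, μ i * μ j * A i j ^ k) / k.factorial := by positivity
    _ = _ := by simp only [Finset.sum_div, mul_div_assoc]

end Matrix

section GaussianKernel

variable {ι E : Type*} [Fintype ι] [NormedAddCommGroup E]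

theorem sum_mul_mul_exp_neg_mul_norm_sub_sq_nonneg [InnerProductSpace ℝ E] (x : ι → E)
    (μ : ι → ℝ) {t : ℝ} (ht : 0 ≤ t) :
    0 ≤ ∑ i, ∑ j, μ i * μ j * exp (-(t * ‖x i - x j‖ ^ 2)) := by
  have hA : ((2 * t) • Matrix.gram ℝ x).PosSemidef :=
    (Matrix.posSemidef_gram ℝ x).smul (by positivity)
  have hsplit (i j : ι) : exp (-(t * ‖x i - x j‖ ^ 2)) = exp (-(t * ‖x i‖ ^ 2)) *
      exp (-(t * ‖x j‖ ^ 2)) * exp (((2 * t) • Matrix.gram ℝ x) i j) := by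
    rw [← exp_add, ← exp_add, norm_sub_sq_real]
    simp only [Matrix.smul_apply, Matrix.gram_apply, smul_eq_mul]
    ring_nf
  refine (hA.sum_mul_mul_exp_nonneg fun i => μ i * exp (-(t * ‖x i‖ ^ 2))).trans_eq
    (sum_congr rfl fun i _ => sum_congr rfl fun j _ => ?_)
  rw [hsplit]; ring

theorem tendsto_sum_mul_mul_exp_neg_mul_norm_sub_sq_atTop {x : ι → E}
    (hx : Function.Injective x) (μ : ι → ℝ) :
    Tendsto (fun t => ∑ i, ∑ j, μ i * μ j * exp (-(t * ‖x i - x j‖ ^ 2))) atTop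
      (𝓝 (∑ i, μ i ^ 2)) := by
  classical
  have hdiag : ∑ i, μ i ^ 2 = ∑ i, ∑ j, if i = j then μ i * μ j else 0 := by
    simp [sq]
  rw [hdiag]
  refine tendsto_finsetSum _ fun i _ => tendsto_finsetSum _ fun j _ => ?_
  by_cases hij : i = j
  · subst hij
    simp
  · have hd : 0 < ‖x i - x j‖ ^ 2 := by
      have := sub_ne_zero.mpr (hx.ne hij)
      positivity
    simpa [hij] using ((tendsto_exp_neg_atTop_nhds_zero.comp
      (tendsto_id.atTop_mul_const hd)).const_mul (μ i * μ j))

end GaussianKernel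

section SnowflakeIntegral

theorem integrableOn_one_sub_exp_neg_mul_mul_rpow {α r : ℝ} (hα₀ : 0 < α) (hα₁ : α < 1)
    (hr : 0 ≤ r) :
    IntegrableOn (fun t => (1 - exp (-(t * r))) * t ^ (-α - 1)) (Set.Ioi 0) := by
  have hcont : ContinuousOn (fun t => (1 - exp (-(t * r))) * t ^ (-α - 1)) (Set.Ioi 0) :=
    fun t ht => (by fun_prop : Continuous fun t => 1 - exp (-(t * r))).continuousWithinAt.mul
      (continuousAt_rpow_const t _ (Or.inl (ne_of_gt ht))).continuousWithinAt
  have hbound {t : ℝ} (ht : 0 < t) : ‖(1 - exp (-(t * r))) * t ^ (-α - 1)‖ ≤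
      min (r * t ^ (-α)) (t ^ (-α - 1)) := by
    have hw : 0 < t ^ (-α - 1) := rpow_pos_of_pos ht _
    have hexp_le : exp (-(t * r)) ≤ 1 := exp_le_one_iff.mpr (by nlinarith)
    have hlin : 1 - exp (-(t * r)) ≤ t * r := by linarith [add_one_le_exp (-(t * r))]
    have hpow : t * t ^ (-α - 1) = t ^ (-α) := by
      rw [mul_comm, ← rpow_add_one ht.ne']; ring_nf
    rw [norm_of_nonneg (mul_nonneg (by linarith) hw.le)]
    refine le_min ?_ ?_
    · calc (1 - exp (-(t * r))) * t ^ (-α - 1) ≤ t * r * t ^ (-α - 1) := by gcongr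
        _ = r * t ^ (-α) := by rw [← hpow]; ring
    · exact mul_le_of_le_one_left hw.le (by linarith [exp_pos (-(t * r))])
  rw [← Set.Ioc_union_Ioi_eq_Ioi zero_le_one]
  refine IntegrableOn.union ?_ ?_
  · have hint : IntegrableOn (fun t : ℝ => t ^ (-α)) (Set.Ioc 0 1) := by
      simpa [intervalIntegrable_iff, Set.uIoc_of_le zero_le_one] using
        intervalIntegral.intervalIntegrable_rpow' (a := 0) (b := 1) (r := -α) (by linarith)
    refine Integrable.mono' (hint.const_mul r)
      ((hcont.mono Set.Ioc_subset_Ioi_self).aestronglyMeasurable measurableSet_Ioc)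
      (ae_restrict_of_forall_mem measurableSet_Ioc fun t ht => ?_)
    exact (hbound ht.1).trans (min_le_left _ _)
  · refine Integrable.mono' (integrableOn_Ioi_rpow_of_lt (by linarith : -α - 1 < -1) one_pos)
      ((hcont.mono (Set.Ioi_subset_Ioi zero_le_one)).aestronglyMeasurable measurableSet_Ioi)
      (ae_restrict_of_forall_mem measurableSet_Ioi fun t ht => ?_)
    exact (hbound (one_pos.trans ht)).trans (min_le_right _ _)

theorem integral_one_sub_exp_neg_mul_mul_rpow {α r : ℝ} (hα₀ : 0 < α) (hr : 0 ≤ r) :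
    ∫ t in Set.Ioi 0, (1 - exp (-(t * r))) * t ^ (-α - 1)
      = r ^ α * ∫ t in Set.Ioi 0, (1 - exp (-t)) * t ^ (-α - 1) := by
  rcases hr.eq_or_lt with rfl | hr
  · simp [zero_rpow hα₀.ne']
  have hscale : r ^ (α + 1) * r ^ (-α - 1) = 1 := by
    rw [← rpow_add hr]; simp
  calc ∫ t in Set.Ioi 0, (1 - exp (-(t * r))) * t ^ (-α - 1)
      = ∫ t in Set.Ioi 0, r ^ (α + 1) * ((1 - exp (-(r * t))) * (r * t) ^ (-α - 1)) := by
        refine setIntegral_congr_fun measurableSet_Ioi fun t ht => ?_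
        rw [mul_rpow hr.le (le_of_lt ht), mul_comm r t]
        linear_combination (-(1 - exp (-(t * r))) * t ^ (-α - 1)) * hscale
    _ = r ^ (α + 1) * (r⁻¹ * ∫ t in Set.Ioi 0, (1 - exp (-t)) * t ^ (-α - 1)) := by
        rw [integral_const_mul, integral_comp_mul_left_Ioi
          (fun u => (1 - exp (-u)) * u ^ (-α - 1)) 0 hr, mul_zero, smul_eq_mul]
    _ = r ^ α * ∫ t in Set.Ioi 0, (1 - exp (-t)) * t ^ (-α - 1) := by
        rw [rpow_add hr, rpow_one]; field_simp

theorem setIntegral_Ioi_pos_of_eventually_pos {f : ℝ → ℝ} {a : ℝ}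
    (hf : IntegrableOn f (Set.Ioi a)) (hnonneg : ∀ t ∈ Set.Ioi a, 0 ≤ f t)
    (hpos : ∀ᶠ t in atTop, 0 < f t) : 0 < ∫ t in Set.Ioi a, f t := by
  obtain ⟨T, hT⟩ := eventually_atTop.mp hpos
  rw [setIntegral_pos_iff_support_of_nonneg_ae
    (ae_restrict_of_forall_mem measurableSet_Ioi hnonneg) hf]
  have hsub : Set.Ioi (max a T) ⊆ Function.support f ∩ Set.Ioi a := fun t ht =>
    ⟨(hT t (le_of_max_le_right ht.le)).ne', (le_max_left a T).trans_lt ht⟩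
  exact (measure_mono hsub).trans_lt' (by simp)

theorem integral_one_sub_exp_neg_mul_rpow_pos {α : ℝ} (hα₀ : 0 < α) (hα₁ : α < 1) :
    0 < ∫ t in Set.Ioi 0, (1 - exp (-t)) * t ^ (-α - 1) := by
  have hpos {t : ℝ} (ht : 0 < t) : 0 < (1 - exp (-t)) * t ^ (-α - 1) :=
    mul_pos (sub_pos.mpr (exp_lt_one_iff.mpr (by linarith))) (rpow_pos_of_pos ht _)
  refine setIntegral_Ioi_pos_of_eventually_pos ?_ (fun t ht => (hpos ht).le)
    ((eventually_gt_atTop 0).mono fun t ht => hpos ht)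
  simpa using integrableOn_one_sub_exp_neg_mul_mul_rpow hα₀ hα₁ zero_le_one

end SnowflakeIntegral

section QuadraticForm

variable {ι : Type*} [Fintype ι]

theorem sum_mul_mul_one_sub_of_sum_eq_zero {μ : ι → ℝ} (hμ : ∑ i, μ i = 0) (K : ι → ι → ℝ) :
    ∑ i, ∑ j, μ i * μ j * (1 - K i j) = -∑ i, ∑ j, μ i * μ j * K i j := by
  simp only [mul_sub, mul_one, sum_sub_distrib, ← mul_sum, ← sum_mul, hμ]
  simp

theorem integrableOn_sum_mul_mul_one_sub_exp_neg_mul_mul_rpow {α : ℝ} (hα₀ : 0 < α)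
    (hα₁ : α < 1) (μ : ι → ℝ) {r : ι → ι → ℝ} (hr : ∀ i j, 0 ≤ r i j) :
    IntegrableOn (fun t => ∑ i, ∑ j, μ i * μ j * ((1 - exp (-(t * r i j))) * t ^ (-α - 1)))
      (Set.Ioi 0) :=
  integrable_finsetSum _ fun i _ => integrable_finsetSum _ fun j _ =>
    (integrableOn_one_sub_exp_neg_mul_mul_rpow hα₀ hα₁ (hr i j)).const_mul _

theorem sum_mul_mul_rpow_mul_integral {α : ℝ} (hα₀ : 0 < α) (hα₁ : α < 1) (μ : ι → ℝ)
    {r : ι → ι → ℝ} (hr : ∀ i j, 0 ≤ r i j) :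
    (∑ i, ∑ j, μ i * μ j * r i j ^ α) * ∫ t in Set.Ioi 0, (1 - exp (-t)) * t ^ (-α - 1)
      = ∫ t in Set.Ioi 0, ∑ i, ∑ j, μ i * μ j * ((1 - exp (-(t * r i j))) * t ^ (-α - 1)) := by
  have hint (i j : ι) := (integrableOn_one_sub_exp_neg_mul_mul_rpow hα₀ hα₁ (hr i j)).const_mul
    (μ i * μ j)
  rw [integral_finsetSum _ fun i _ => integrable_finsetSum _ fun j _ => hint i j, sum_mul]
  refine sum_congr rfl fun i _ => ?_
  rw [integral_finsetSum _ fun j _ => hint i j, sum_mul]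
  refine sum_congr rfl fun j _ => ?_
  rw [integral_const_mul, integral_one_sub_exp_neg_mul_mul_rpow hα₀ (hr i j), mul_assoc]

end QuadraticForm

/-- Strict negative type for snowflakes of Euclidean metrics: for distinct points in a
real inner product space, `0 < α < 1`, and nonzero coefficients summing to zero,
the quadratic form of the `2α`-powered distance matrix is strictly negative. -/
theorem snowflake_strict_negType {E : Type*} [NormedAddCommGroup E] [InnerProductSpace ℝ E]
    (n : ℕ) (x : Fin n → E) (hx : Function.Injective x) (α : ℝ) (hα₀ : 0 < α) (hα₁ : α < 1)
    (lam : Fin n → ℝ) (hsum : ∑ i, lam i = 0) (hlam : lam ≠ 0) :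
    ∑ i, ∑ j, lam i * lam j * ‖x i - x j‖ ^ (2 * α) < 0 := by
  set G : ℝ → ℝ := fun t => ∑ i, ∑ j, lam i * lam j * exp (-(t * ‖x i - x j‖ ^ 2))
  have hdist (i j : Fin n) : ‖x i - x j‖ ^ (2 * α) = (‖x i - x j‖ ^ 2) ^ α := by
    rw [rpow_mul (norm_nonneg _), rpow_two]
  have hrepr := sum_mul_mul_rpow_mul_integral hα₀ hα₁ lam fun i j => sq_nonneg ‖x i - x j‖
  have hint := integrableOn_sum_mul_mul_one_sub_exp_neg_mul_mul_rpow hα₀ hα₁ lam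
    fun i j => sq_nonneg ‖x i - x j‖
  simp only [← mul_assoc, ← sum_mul, sum_mul_mul_one_sub_of_sum_eq_zero hsum, neg_mul,
    integral_neg, ← hdist] at hrepr hint
  have hsq : 0 < ∑ i, lam i ^ 2 := by
    obtain ⟨i, hi⟩ := Function.ne_iff.mp hlam
    exact sum_pos' (fun j _ => sq_nonneg _) ⟨i, mem_univ i, sq_pos_of_ne_zero hi⟩
  have hG : 0 < ∫ t in Set.Ioi 0, G t * t ^ (-α - 1) := by
    refine setIntegral_Ioi_pos_of_eventually_pos (by simpa using hint.neg)
      (fun t ht => mul_nonneg (sum_mul_mul_exp_neg_mul_norm_sub_sq_nonneg x lam (le_of_lt ht))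
        (rpow_pos_of_pos ht _).le) ?_
    filter_upwards [(tendsto_sum_mul_mul_exp_neg_mul_norm_sub_sq_atTop hx lam).eventually
      (lt_mem_nhds hsq), eventually_gt_atTop 0] with t hGt ht
    exact mul_pos hGt (rpow_pos_of_pos ht _)
  exact neg_of_mul_neg_left (hrepr.trans_lt (neg_neg_of_pos hG))
    (integral_one_sub_exp_neg_mul_rpow_pos hα₀ hα₁).le
end

section
/- Let X = {x₁, …, xₙ} be an n-point metric space whose squared distance matrix satisfies the strict negative-type inequalities: Λ D Λᵀ < 0 for every nonzero Λ ∈ ℝⁿ with Σλᵢ = 0, where D_{ij} = d(xᵢ,xⱼ)². Then in any isometric embedding f of X into a Euclidean space, the points f(x₁), …, f(xₙ) are affinely independent; in particular X does not embed isometrically into ℝ^{n-2}. -/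
/-!
For weights `w` with `∑ wᵢ = 0` and points `pᵢ` of a real inner product space,
`∑ᵢ ∑ⱼ wᵢ wⱼ ‖pᵢ - pⱼ‖² = -2 ‖∑ᵢ wᵢ pᵢ‖²`. An affine dependence `∑ wᵢ pᵢ = 0`, `∑ wᵢ = 0`,
`w ≠ 0` among the images of an isometric embedding therefore makes the quadratic form of the
squared distance matrix vanish at `w`, contradicting strict negative type. Affinely independent
points of `ℝᵏ` number at most `k + 1`, which excludes `ℝ^(n-2)`.
-/

open Finset

def IsStrictNegType {ι X : Type*} [Fintype ι] [PseudoMetricSpace X] (x : ι → X) : Prop :=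
  ∀ w : ι → ℝ, w ≠ 0 → ∑ i, w i = 0 → ∑ i, ∑ j, w i * w j * dist (x i) (x j) ^ 2 < 0

namespace IsStrictNegType

variable {ι X Y : Type*} [Fintype ι] [PseudoMetricSpace X] [PseudoMetricSpace Y]

theorem of_dist_eq {x : ι → X} {y : ι → Y} (hx : IsStrictNegType x)
    (hdist : ∀ i j, dist (y i) (y j) = dist (x i) (x j)) : IsStrictNegType y := by
  intro w hw hsum
  simpa only [hdist] using hx w hw hsum

end IsStrictNegType

theorem sum_sum_mul_norm_sub_sq_of_sum_eq_zero {ι E : Type*} [NormedAddCommGroup E]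
    [InnerProductSpace ℝ E] (s : Finset ι) (w : ι → ℝ) (p : ι → E) (hw : ∑ i ∈ s, w i = 0) :
    ∑ i ∈ s, ∑ j ∈ s, w i * w j * ‖p i - p j‖ ^ 2 = -2 * ‖∑ i ∈ s, w i • p i‖ ^ 2 := by
  have h := inner_sum_smul_sum_smul_of_sum_eq_zero p hw p hw
  rw [real_inner_self_eq_norm_sq] at h
  simp only [← pow_two] at h
  linarith

theorem IsStrictNegType.affineIndependent {ι E : Type*} [Fintype ι] [NormedAddCommGroup E]
    [InnerProductSpace ℝ E] {p : ι → E} (hp : IsStrictNegType p) : AffineIndependent ℝ p := by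
  rw [affineIndependent_iff_of_fintype]
  intro w hsum hcomb
  rw [univ.weightedVSub_eq_linear_combination hsum] at hcomb
  by_contra hw
  have hneg := hp w (fun h => hw fun i => congrFun h i) hsum
  simp only [dist_eq_norm, sum_sum_mul_norm_sub_sq_of_sum_eq_zero univ w p hsum, hcomb,
    norm_zero] at hneg
  norm_num at hneg

theorem AffineIndependent.card_le_finrank_add_one {ι k V : Type*} [Fintype ι] [DivisionRing k]
    [AddCommGroup V] [Module k V] [FiniteDimensional k V] {p : ι → V}
    (hp : AffineIndependent k p) : Fintype.card ι ≤ Module.finrank k V + 1 :=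
  hp.card_le_finrank_succ.trans (Nat.add_le_add_right (Submodule.finrank_le _) 1)

/-- If a finite metric space satisfies the strict negative-type inequalities for its
squared distance matrix, then the image of any isometric embedding into a Euclidean
space is affinely independent; in particular (for `n ≥ 2`) it does not embed
isometrically into `ℝ^(n-2)`. -/
theorem strict_negType_implies_affineIndependent {X : Type*} [MetricSpace X]
    (n : ℕ) (hn : 2 ≤ n) (x : Fin n → X)
    (hstrict : ∀ lam : Fin n → ℝ, lam ≠ 0 → ∑ i, lam i = 0 →
      ∑ i, ∑ j, lam i * lam j * dist (x i) (x j) ^ 2 < 0) :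
    (∀ k : ℕ, ∀ f : Fin n → EuclideanSpace ℝ (Fin k),
      (∀ i j, dist (f i) (f j) = dist (x i) (x j)) → AffineIndependent ℝ f) ∧
    ¬ ∃ f : Fin n → EuclideanSpace ℝ (Fin (n - 2)),
      ∀ i j, dist (f i) (f j) = dist (x i) (x j) := by
  have hx : IsStrictNegType x := hstrict
  have hindep : ∀ k : ℕ, ∀ f : Fin n → EuclideanSpace ℝ (Fin k),
      (∀ i j, dist (f i) (f j) = dist (x i) (x j)) → AffineIndependent ℝ f :=
    fun _ _ hf => (hx.of_dist_eq hf).affineIndependent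
  refine ⟨hindep, fun ⟨f, hf⟩ => ?_⟩
  have hcard := (hindep _ f hf).card_le_finrank_add_one
  rw [Fintype.card_fin, finrank_euclideanSpace_fin] at hcard
  omega
end
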